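/- Let λ ∈ (0,1) and let 𝓢 be any enumeration of E that is non-descending with respect to c_λ. Then f₁(B_M(S^↑_λ)) ≤ f₁(B_M(𝓢)) ≤ f₁(B_M(S^↓_λ)); that is, among all greedy bases obtained from orderings non-descending in c_λ, the ordering that breaks c_λ-ties by increasing c₁ minimizes the first objective and the ordering that breaks c_λ-ties by decreasing c₁ maximizes it. -/

import Mathlib

open Set

noncomputable section

/-- The weighted cost `c_λ(e) = λ·c₁(e) + (1−λ)·c₂(e)`. -/
def clam {α : Type*} (c₁ c₂ : α → ℝ) (lam : ℝ) (e : α) : ℝ :=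
  lam * c₁ e + (1 - lam) * c₂ e

/-- The set `𝓟` of pairs `(e,f)` with `c₁(e) > c₁(f)` and `c₂(e) < c₂(f)`. -/
def Pset {α : Type*} (c₁ c₂ : α → ℝ) : Set (α × α) :=
  {p | c₁ p.2 < c₁ p.1 ∧ c₂ p.1 < c₂ p.2}

/-- The set `𝓔 = {λ(e,f) : (e,f) ∈ 𝓟}` of intersection values: for `(e,f) ∈ 𝓟`, `λ(e,f)` is
the unique `t ∈ (0,1)` with `c_t(e) = c_t(f)`. -/
def crossSet {α : Type*} (c₁ c₂ : α → ℝ) : Set ℝ :=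
  {t | t ∈ Set.Ioo (0 : ℝ) 1 ∧
    ∃ p ∈ Pset c₁ c₂, clam c₁ c₂ t p.1 = clam c₁ c₂ t p.2}

/-- `e` strictly precedes `f` in the ordering `S^↑_λ`, i.e. in the non-descending
lexicographic order by the key `(c_λ(e), c₁(e))` with remaining ties broken by the fixed
linear order on the ground set. -/
def precUp {α : Type*} [LinearOrder α] (c₁ c₂ : α → ℝ) (lam : ℝ) (e f : α) : Prop :=
  clam c₁ c₂ lam e < clam c₁ c₂ lam f ∨
    (clam c₁ c₂ lam e = clam c₁ c₂ lam f ∧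
      (c₁ e < c₁ f ∨ (c₁ e = c₁ f ∧ e < f)))

/-- `e` strictly precedes `f` in the ordering `S^↓_λ`, i.e. in the non-descending
lexicographic order by the key `(c_λ(e), −c₁(e))` with remaining ties broken by the fixed
linear order on the ground set. -/
def precDown {α : Type*} [LinearOrder α] (c₁ c₂ : α → ℝ) (lam : ℝ) (e f : α) : Prop :=
  clam c₁ c₂ lam e < clam c₁ c₂ lam f ∨
    (clam c₁ c₂ lam e = clam c₁ c₂ lam f ∧
      (c₁ f < c₁ e ∨ (c₁ e = c₁ f ∧ e < f)))

open Classical in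
/-- One step of the greedy algorithm: add `e` to the current set `I` if this keeps it
independent in `M`. -/
def greedyStep {α : Type*} (M : Matroid α) (I : Set α) (e : α) : Set α :=
  if M.Indep (insert e I) then insert e I else I

/-- The greedy basis `B_M(𝓢)`: scan the list `𝓢` in order, starting from `∅`, adding each
element whose addition keeps the current set independent in `M`. -/
def greedy {α : Type*} (M : Matroid α) (S : List α) : Set α :=
  S.foldl (greedyStep M) ∅

/-- The total cost `f_i(B) = Σ_{e∈B} c_i(e)` of a set of elements. -/
def setCost {α : Type*} (c : α → ℝ) (B : Set α) : ℝ := ∑ᶠ e ∈ B, c e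

/-- `L` is the enumeration `S^↑_λ` of the set `G`: it enumerates `G` without repetition,
sorted non-descendingly by the lexicographic key `(c_λ(e), c₁(e))` with remaining ties
broken by the fixed linear order. -/
def IsUpList {α : Type*} [LinearOrder α] (c₁ c₂ : α → ℝ) (lam : ℝ)
    (G : Set α) (L : List α) : Prop :=
  L.Nodup ∧ (∀ e : α, e ∈ L ↔ e ∈ G) ∧ L.Pairwise (precUp c₁ c₂ lam)

/-- `L` is the enumeration `S^↓_λ` of the set `G`: it enumerates `G` without repetition,
sorted non-descendingly by the lexicographic key `(c_λ(e), −c₁(e))` with remaining ties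
broken by the fixed linear order. -/
def IsDownList {α : Type*} [LinearOrder α] (c₁ c₂ : α → ℝ) (lam : ℝ)
    (G : Set α) (L : List α) : Prop :=
  L.Nodup ∧ (∀ e : α, e ∈ L ↔ e ∈ G) ∧ L.Pairwise (precDown c₁ c₂ lam)

section GreedyAux

variable {α : Type*}

lemma subset_greedyStep (M : Matroid α) (I : Set α) (e : α) : I ⊆ greedyStep M I e := by
  unfold greedyStep; split
  · exact Set.subset_insert _ _
  · exact subset_rfl

lemma greedyStep_indep (M : Matroid α) {I : Set α} (hI : M.Indep I) (e : α) :
    M.Indep (greedyStep M I e) := by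
  unfold greedyStep; split
  · assumption
  · exact hI

lemma greedyStep_subset (M : Matroid α) (I : Set α) (e : α) :
    greedyStep M I e ⊆ insert e I := by
  unfold greedyStep; split
  · exact subset_rfl
  · exact Set.subset_insert _ _

lemma foldl_greedy_indep (M : Matroid α) (S : List α) {I : Set α} (hI : M.Indep I) :
    M.Indep (S.foldl (greedyStep M) I) := by
  induction S generalizing I with
  | nil => simpa
  | cons a S ih => simpa using ih (greedyStep_indep M hI a)

lemma subset_foldl_greedy (M : Matroid α) (S : List α) (I : Set α) :
    I ⊆ S.foldl (greedyStep M) I := by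
  induction S generalizing I with
  | nil => simp
  | cons a S ih =>
    simp only [List.foldl_cons]
    exact (subset_greedyStep M I a).trans (ih _)

lemma foldl_greedy_subset (M : Matroid α) (S : List α) (I : Set α) :
    S.foldl (greedyStep M) I ⊆ I ∪ {e | e ∈ S} := by
  induction S generalizing I with
  | nil => simp
  | cons a S ih =>
    simp only [List.foldl_cons]
    refine (ih _).trans ?_
    intro x hx
    rcases hx with hx | hx
    · rcases greedyStep_subset M I a hx with rfl | hx
      · exact Or.inr (by simp)
      · exact Or.inl hx
    · exact Or.inr (by simp [Set.mem_setOf_eq] at hx ⊢; exact Or.inr hx)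

lemma foldl_greedy_maximal (M : Matroid α) (S : List α) :
    ∀ (I : Set α) {e : α}, e ∈ S →
    e ∈ S.foldl (greedyStep M) I ∨ ¬ M.Indep (insert e (S.foldl (greedyStep M) I)) := by
  induction S with
  | nil => intro I e he; simp at he
  | cons a S ih =>
    intro I e he
    simp only [List.foldl_cons]
    rcases List.mem_cons.1 he with rfl | he'
    · by_cases h : M.Indep (insert e I)
      · left
        apply subset_foldl_greedy M S _
        unfold greedyStep
        rw [if_pos h]
        exact Set.mem_insert _ _
      · right
        intro hind
        apply h
        refine hind.subset (insert_subset_insert ?_)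
        exact (subset_greedyStep M I e).trans (subset_foldl_greedy M S _)
    · exact ih _ he'

lemma greedy_indep (M : Matroid α) (S : List α) : M.Indep (greedy M S) :=
  foldl_greedy_indep M S M.empty_indep

lemma greedy_subset (M : Matroid α) (S : List α) : greedy M S ⊆ {e | e ∈ S} := by
  have := foldl_greedy_subset M S ∅
  simpa [greedy] using this

lemma encard_le_greedy (M : Matroid α) (S : List α) {J : Set α}
    (hJ : M.Indep J) (hJS : J ⊆ {e | e ∈ S}) : J.encard ≤ (greedy M S).encard := by
  by_contra h
  push_neg at h
  obtain ⟨e, heJ, hins⟩ := (greedy_indep M S).augment hJ h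
  rcases foldl_greedy_maximal M S ∅ (hJS heJ.1) with hmem | hdep
  · exact heJ.2 hmem
  · exact hdep hins

lemma greedy_base (M : Matroid α) (hE : M.E = Set.univ) {L : List α}
    (hfull : ∀ e : α, e ∈ L) : M.IsBase (greedy M L) := by
  rw [← Matroid.isBasis_ground_iff, hE]
  refine (greedy_indep M L).isBasis_of_forall_insert (Set.subset_univ _) ?_
  rintro e ⟨-, he⟩
  rcases foldl_greedy_maximal M L ∅ (hfull e) with h | h
  · exact absurd h he
  · exact ⟨h, by rw [hE]; exact Set.subset_univ _⟩

lemma greedy_take_eq (M : Matroid α) (L : List α) (j : ℕ) :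
    greedy M L = (L.drop j).foldl (greedyStep M) (greedy M (L.take j)) := by
  rw [greedy, greedy, ← List.foldl_append, List.take_append_drop]

lemma greedy_inter_prefix (M : Matroid α) {L : List α} (hL : L.Nodup) (j : ℕ) :
    greedy M L ∩ {e | e ∈ L.take j} = greedy M (L.take j) := by
  apply subset_antisymm
  · rintro x ⟨hx1, hx2⟩
    rw [greedy_take_eq M L j] at hx1
    rcases foldl_greedy_subset M _ _ hx1 with h | h
    · exact h
    · exact absurd hx2 (fun hx2 => (List.disjoint_take_drop hL le_rfl) hx2 h)
  · intro x hx
    constructor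
    · rw [greedy_take_eq M L j]; exact subset_foldl_greedy M _ _ hx
    · exact greedy_subset M _ hx

lemma prefix_ncard_le [Fintype α] (M : Matroid α) {L : List α} (hL : L.Nodup)
    {B' : Set α} (hB' : M.Indep B') (j : ℕ) :
    (B' ∩ {e | e ∈ L.take j}).ncard ≤ (greedy M L ∩ {e | e ∈ L.take j}).ncard := by
  classical
  have h : (B' ∩ {e | e ∈ L.take j}).encard ≤ (greedy M L ∩ {e | e ∈ L.take j}).encard := by
    rw [greedy_inter_prefix M hL j]
    exact encard_le_greedy M (L.take j) (hB'.subset Set.inter_subset_left)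
      Set.inter_subset_right
  rw [(Set.toFinite _).encard_eq_coe_toFinset_card,
    (Set.toFinite _).encard_eq_coe_toFinset_card] at h
  rw [Set.ncard_eq_toFinset_card, Set.ncard_eq_toFinset_card]
  exact_mod_cast h

lemma setCost_eq_sum [Fintype α] (c : α → ℝ) (B : Set α) :
    setCost c B = ∑ e ∈ B.toFinite.toFinset, c e := by
  rw [setCost, ← finsum_mem_coe_finset, Set.Finite.coe_toFinset]

lemma setCost_empty [Fintype α] (c : α → ℝ) : setCost c (∅ : Set α) = 0 := by
  simp [setCost_eq_sum]

lemma setCost_insert [Fintype α] (c : α → ℝ) {B : Set α} {x : α} (hx : x ∉ B) :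
    setCost c (insert x B) = setCost c B + c x := by
  classical
  rw [setCost_eq_sum, setCost_eq_sum,
    show (insert x B).toFinite.toFinset = insert x B.toFinite.toFinset by
      ext y; simp only [Set.Finite.mem_toFinset, Finset.mem_insert]; exact Iff.rfl,
    Finset.sum_insert (by simpa using hx)]
  ring

lemma arith_step {a a' m m' x x' we t : ℝ}
    (h1 : a ≤ a' + we * (m - m')) (h2 : we ≤ t) (h3 : 0 ≤ (m + x) - (m' + x')) :
    a + x * we ≤ a' + x' * we + t * ((m + x) - (m' + x')) := by
  nlinarith [mul_le_mul_of_nonneg_right h2 h3]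

lemma greedy_min_cost [Fintype α] (M : Matroid α) (hE : M.E = Set.univ)
    (w : α → ℝ) {L : List α} (hnd : L.Nodup) (hfull : ∀ e : α, e ∈ L)
    (hsort : L.Pairwise fun e f => w e ≤ w f)
    {B' : Set α} (hB' : M.IsBase B') :
    setCost w (greedy M L) ≤ setCost w B' := by
  classical
  set n := L.length with hn
  set B := greedy M L with hBdef
  set P : ℕ → Set α := fun j => {e | e ∈ L.take j} with hP
  have F1 : ∀ j, ((B' ∩ P j).ncard : ℝ) ≤ ((B ∩ P j).ncard : ℝ) := by
    intro j
    exact_mod_cast prefix_ncard_le M hnd hB'.indep j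
  have hPsucc : ∀ j (hj : j < n), P (j + 1) = insert (L[j]'hj) (P j) := by
    intro j hj
    ext x
    simp only [hP, Set.mem_setOf_eq, Set.mem_insert_iff, List.take_succ,
      List.mem_append, List.getElem?_eq_getElem hj, Option.toList_some,
      List.mem_singleton]
    tauto
  have hPnot : ∀ j (hj : j < n), (L[j]'hj) ∉ P j := by
    intro j hj hmem
    have hdrop : (L[j]'hj) ∈ L.drop j := by
      rw [List.drop_eq_getElem_cons hj]
      exact List.mem_cons_self
    exact (List.disjoint_take_drop hnd le_rfl) hmem hdrop
  have claim : ∀ j, j ≤ n → ∀ t : ℝ,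
      (∀ i (hi : i < n), i < j → w (L[i]'hi) ≤ t) →
      setCost w (B ∩ P j) ≤ setCost w (B' ∩ P j)
        + t * (((B ∩ P j).ncard : ℝ) - ((B' ∩ P j).ncard : ℝ)) := by
    intro j
    induction j with
    | zero =>
      intro _ t _
      have h0 : P 0 = ∅ := by ext x; simp [hP]
      simp [h0, setCost_empty]
    | succ j ih =>
      intro hj t ht
      have hjn : j < n := hj
      set e := L[j]'hjn with he
      have hPs := hPsucc j hjn
      have heP := hPnot j hjn
      have hwe : ∀ i (hi : i < n), i < j → w (L[i]'hi) ≤ w e := by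
        intro i hi hij
        exact (List.pairwise_iff_getElem.mp hsort) i j hi hjn hij
      have hkey := ih hjn.le (w e) hwe
      have hte : w e ≤ t := ht j hjn (Nat.lt_succ_self j)
      -- indicator values
      set x : ℝ := if e ∈ B then 1 else 0 with hx
      set x' : ℝ := if e ∈ B' then 1 else 0 with hx'
      have hsplit : ∀ (C : Set α), C ∩ P (j + 1) =
          (if e ∈ C then insert e (C ∩ P j) else C ∩ P j) := by
        intro C
        split_ifs with hc
        · rw [hPs]; ext y
          simp only [Set.mem_inter_iff, Set.mem_insert_iff]
          constructor
          · rintro ⟨hyC, rfl | hy⟩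
            · exact Or.inl rfl
            · exact Or.inr ⟨hyC, hy⟩
          · rintro (rfl | ⟨h1, h2⟩)
            · exact ⟨hc, Or.inl rfl⟩
            · exact ⟨h1, Or.inr h2⟩
        · rw [hPs]; ext y
          simp only [Set.mem_inter_iff, Set.mem_insert_iff]
          constructor
          · rintro ⟨hyC, rfl | hy⟩
            · exact absurd hyC hc
            · exact ⟨hyC, hy⟩
          · rintro ⟨h1, h2⟩
            exact ⟨h1, Or.inr h2⟩
      have hcostC : ∀ (C : Set α), setCost w (C ∩ P (j + 1)) =
          setCost w (C ∩ P j) + (if e ∈ C then (1:ℝ) else 0) * w e := by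
        intro C
        rw [hsplit C]
        split_ifs with hc
        · rw [setCost_insert w (fun h => heP h.2)]; ring
        · ring_nf
      have hcardC : ∀ (C : Set α), (((C ∩ P (j + 1)).ncard : ℝ)) =
          ((C ∩ P j).ncard : ℝ) + (if e ∈ C then (1:ℝ) else 0) := by
        intro C
        rw [hsplit C]
        split_ifs with hc
        · rw [Set.ncard_insert_of_notMem (fun h => heP h.2) (Set.toFinite _)]
          push_cast; ring
        · ring_nf
      rw [hcostC B, hcostC B', hcardC B, hcardC B']
      have h3 : (0:ℝ) ≤ (((B ∩ P j).ncard : ℝ) + (if e ∈ B then (1:ℝ) else 0))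
          - (((B' ∩ P j).ncard : ℝ) + (if e ∈ B' then (1:ℝ) else 0)) := by
        have := F1 (j + 1)
        rw [hcardC B, hcardC B'] at this
        linarith
      exact arith_step hkey hte h3
  have hPn : P n = Set.univ := by
    ext x
    simp only [hP, Set.mem_setOf_eq, Set.mem_univ, iff_true, hn, List.take_length]
    exact hfull x
  rcases Nat.eq_zero_or_pos n with hn0 | hn0
  · have hLnil : L = [] := List.length_eq_zero_iff.mp (by rw [← hn]; exact hn0)
    have : IsEmpty α := ⟨fun a => by simpa [hLnil] using hfull a⟩
    rw [Set.eq_empty_of_isEmpty B, Set.eq_empty_of_isEmpty B', setCost_empty]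
  · have hn1 : n - 1 < n := Nat.sub_lt hn0 one_pos
    have ht : ∀ i (hi : i < n), i < n → w (L[i]'hi) ≤ w (L[n-1]'hn1) := by
      intro i hi _
      rcases lt_or_eq_of_le (Nat.le_sub_one_of_lt hi) with h | h
      · exact (List.pairwise_iff_getElem.mp hsort) i (n-1) hi hn1 h
      · subst h; exact le_rfl
    have hfin := claim n le_rfl (w (L[n-1]'hn1)) ht
    have hBP : B ∩ P n = B := by rw [hPn, Set.inter_univ]
    have hB'P : B' ∩ P n = B' := by rw [hPn, Set.inter_univ]
    rw [hBP, hB'P] at hfin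
    have hcard : (B.ncard : ℝ) = (B'.ncard : ℝ) := by
      exact_mod_cast (greedy_base M hE hfull).ncard_eq_ncard_of_isBase hB'
    rw [hcard] at hfin
    simpa using hfin

lemma setCost_add_mul [Fintype α] (u v : α → ℝ) (ε : ℝ) (B : Set α) :
    setCost (fun e => u e + ε * v e) B = setCost u B + ε * setCost v B := by
  classical
  simp [setCost_eq_sum, Finset.sum_add_distrib, Finset.mul_sum]

lemma setCost_sub_mul [Fintype α] (u v : α → ℝ) (ε : ℝ) (B : Set α) :
    setCost (fun e => u e - ε * v e) B = setCost u B - ε * setCost v B := by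
  classical
  simp [setCost_eq_sum, Finset.sum_sub_distrib, Finset.mul_sum]

lemma exists_eps [Fintype α] (w v : α → ℝ) :
    ∃ ε : ℝ, 0 < ε ∧ ∀ e f : α, w e < w f → ε * |v e| + ε * |v f| ≤ w f - w e := by
  classical
  set S : Finset (α × α) := Finset.univ.filter (fun p => w p.1 < w p.2) with hS
  rcases S.eq_empty_or_nonempty with h | h
  · refine ⟨1, one_pos, fun e f hef => ?_⟩
    exfalso
    have : (e, f) ∈ S := by simp [hS, hef]
    simp [h] at this
  · set ε := S.inf' h (fun p => (w p.2 - w p.1) / (|v p.1| + |v p.2| + 1)) with hε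
    have hpos : 0 < ε := by
      rw [hε, Finset.lt_inf'_iff]
      intro p hp
      have hp' : w p.1 < w p.2 := by simpa [hS] using hp
      have : (0:ℝ) < |v p.1| + |v p.2| + 1 := by positivity
      exact div_pos (by linarith) this
    refine ⟨ε, hpos, fun e f hef => ?_⟩
    have hp : (e, f) ∈ S := by simp [hS, hef]
    have hden : (0:ℝ) < |v e| + |v f| + 1 := by positivity
    have h1 : ε ≤ (w f - w e) / (|v e| + |v f| + 1) := Finset.inf'_le _ hp
    have h2 : ε * (|v e| + |v f| + 1) ≤
        (w f - w e) / (|v e| + |v f| + 1) * (|v e| + |v f| + 1) :=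
      mul_le_mul_of_nonneg_right h1 hden.le
    rw [div_mul_cancel₀ _ (ne_of_gt hden)] at h2
    nlinarith

end GreedyAux

/-- Let `λ ∈ (0,1)` and let `𝓢` be any enumeration of the ground set that
is non-descending with respect to `c_λ`.  Then
`f₁(B_M(S^↑_λ)) ≤ f₁(B_M(𝓢)) ≤ f₁(B_M(S^↓_λ))`. -/
theorem greedy_first_objective_extremal_orderings
    {α : Type*} [Fintype α] [LinearOrder α] (M : Matroid α) (hE : M.E = Set.univ)
    (c₁ c₂ : α → ℝ) (lam : ℝ) (hlam : lam ∈ Set.Ioo (0 : ℝ) 1)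
    (L Lup Ldown : List α)
    (hL : L.Nodup ∧ (∀ e : α, e ∈ L) ∧
      L.Pairwise fun e f => clam c₁ c₂ lam e ≤ clam c₁ c₂ lam f)
    (hup : IsUpList c₁ c₂ lam Set.univ Lup)
    (hdown : IsDownList c₁ c₂ lam Set.univ Ldown) :
    setCost c₁ (greedy M Lup) ≤ setCost c₁ (greedy M L) ∧
      setCost c₁ (greedy M L) ≤ setCost c₁ (greedy M Ldown) := by
  classical
  obtain ⟨hndL, hfullL, hsortL⟩ := hL
  obtain ⟨hndU, hmemU, hsortU⟩ := hup
  obtain ⟨hndD, hmemD, hsortD⟩ := hdown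
  have hfullU : ∀ e : α, e ∈ Lup := fun e => (hmemU e).mpr (Set.mem_univ e)
  have hfullD : ∀ e : α, e ∈ Ldown := fun e => (hmemD e).mpr (Set.mem_univ e)
  have hBL := greedy_base M hE hfullL
  have hBU := greedy_base M hE hfullU
  have hBD := greedy_base M hE hfullD
  have hsortU' : Lup.Pairwise fun e f => clam c₁ c₂ lam e ≤ clam c₁ c₂ lam f := by
    refine hsortU.imp ?_
    intro e f h
    simp only [precUp] at h
    rcases h with h | ⟨h, -⟩
    · exact h.le
    · exact h.le
  have hsortD' : Ldown.Pairwise fun e f => clam c₁ c₂ lam e ≤ clam c₁ c₂ lam f := by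
    refine hsortD.imp ?_
    intro e f h
    simp only [precDown] at h
    rcases h with h | ⟨h, -⟩
    · exact h.le
    · exact h.le
  have hequp : setCost (clam c₁ c₂ lam) (greedy M Lup) =
      setCost (clam c₁ c₂ lam) (greedy M L) :=
    le_antisymm (greedy_min_cost M hE _ hndU hfullU hsortU' hBL)
      (greedy_min_cost M hE _ hndL hfullL hsortL hBU)
  have heqdn : setCost (clam c₁ c₂ lam) (greedy M Ldown) =
      setCost (clam c₁ c₂ lam) (greedy M L) :=
    le_antisymm (greedy_min_cost M hE _ hndD hfullD hsortD' hBL)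
      (greedy_min_cost M hE _ hndL hfullL hsortL hBD)
  obtain ⟨ε, hε, hbound⟩ := exists_eps (clam c₁ c₂ lam) c₁
  constructor
  · -- up direction
    have hupkey : setCost (fun e => clam c₁ c₂ lam e + ε * c₁ e) (greedy M Lup) ≤
        setCost (fun e => clam c₁ c₂ lam e + ε * c₁ e) (greedy M L) := by
      refine greedy_min_cost M hE _ hndU hfullU ?_ hBL
      refine hsortU.imp ?_
      intro e f h
      simp only [precUp] at h
      rcases h with h | ⟨h, h2⟩
      · have hb := hbound e f h
        nlinarith [le_abs_self (c₁ e), neg_abs_le (c₁ f), hε.le,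
          abs_nonneg (c₁ e), abs_nonneg (c₁ f)]
      · have hc : c₁ e ≤ c₁ f := by
          rcases h2 with h2 | ⟨h2, -⟩
          · exact h2.le
          · exact h2.le
        have := mul_le_mul_of_nonneg_left hc hε.le
        linarith [h.le]
    rw [setCost_add_mul, setCost_add_mul, hequp] at hupkey
    exact le_of_mul_le_mul_left (by linarith) hε
  · -- down direction
    have hdnkey : setCost (fun e => clam c₁ c₂ lam e - ε * c₁ e) (greedy M Ldown) ≤
        setCost (fun e => clam c₁ c₂ lam e - ε * c₁ e) (greedy M L) := by
      refine greedy_min_cost M hE _ hndD hfullD ?_ hBL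
      refine hsortD.imp ?_
      intro e f h
      simp only [precDown] at h
      rcases h with h | ⟨h, h2⟩
      · have hb := hbound e f h
        nlinarith [le_abs_self (c₁ f), neg_abs_le (c₁ e), hε.le,
          abs_nonneg (c₁ e), abs_nonneg (c₁ f)]
      · have hc : c₁ f ≤ c₁ e := by
          rcases h2 with h2 | ⟨h2, -⟩
          · exact h2.le
          · exact h2.ge
        have := mul_le_mul_of_nonneg_left hc hε.le
        linarith [h.le]
    rw [setCost_sub_mul, setCost_sub_mul, heqdn] at hdnkey
    exact le_of_mul_le_mul_left (by linarith) hε
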